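/- Attainment of the outer minimum in Theorem 1 at the conditional means: the pair (a(S), b(S)) attains the minimum in the min-max problem, i.e., sup_{α≥0} E_μ[F_M(a(S), b(S), α)] = p(1−p)·A_M, and for every (a,b) ∈ ℝ², sup_{α≥0} E_μ[F_M(a,b,α)] ≥ p(1−p)·A_M. -/

import Mathlib

open MeasureTheory ProbabilityTheory

/-! Since `E[f·1_A] = p·E₊[f]` and `E[f·1_{Aᶜ}] = (1−p)·E₋[f]`, integrating `F_M(a,b,α)` gives
`p(1−p)·(E₊(S−a)² + E₋(S−b)² + 2α(m + b(S) − a(S)) − α²)`: the term linear in `α` sees `S` only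
through its conditional means, not through `(a,b)`. Its supremum over `α ≥ 0` is attained at
`α = max(m + b(S) − a(S), 0)` and adds the squared margin penalty, which is thus the same for all
`(a,b)`; the two mean squared deviations are minimised at `a = a(S)`, `b = b(S)`. -/

noncomputable def FM {Ω : Type*} (A : Set Ω) (p m : ℝ) (S : Ω → ℝ)
    (a b α : ℝ) (ω : Ω) : ℝ :=
  (1 - p) * (S ω - a) ^ 2 * A.indicator 1 ω
    + p * (S ω - b) ^ 2 * Aᶜ.indicator 1 ω
    - p * (1 - p) * α ^ 2
    + 2 * α * (p * (1 - p) * m + p * S ω * Aᶜ.indicator 1 ω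
        - (1 - p) * S ω * A.indicator 1 ω)

lemma setIntegral_eq_measureReal_mul_integral_cond {Ω : Type*} [MeasurableSpace Ω]
    {μ : Measure Ω} {s : Set Ω} (hs : μ s ≠ ⊤) (f : Ω → ℝ) :
    ∫ ω in s, f ω ∂μ = μ.real s * ∫ ω, f ω ∂μ[|s] := by
  rw [ProbabilityTheory.cond, integral_smul_measure, ENNReal.toReal_inv, smul_eq_mul,
    ← measureReal_def]
  by_cases h0 : μ s = 0
  · simp [Measure.restrict_eq_zero.mpr h0]
  · rw [mul_inv_cancel_left₀ (measureReal_ne_zero_iff hs |>.mpr h0)]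

lemma integral_sub_integral_sq_le_integral_sub_sq {Ω : Type*} [MeasurableSpace Ω]
    {ν : Measure Ω} [IsProbabilityMeasure ν] {X : Ω → ℝ} (hX : AEStronglyMeasurable X ν)
    (a : ℝ) :
    ∫ ω, (X ω - ∫ x, X x ∂ν) ^ 2 ∂ν ≤ ∫ ω, (X ω - a) ^ 2 ∂ν :=
  calc ∫ ω, (X ω - ∫ x, X x ∂ν) ^ 2 ∂ν = Var[fun ω ↦ X ω - a; ν] := by
        rw [variance_sub_const hX, variance_eq_integral hX.aemeasurable]
    _ ≤ ∫ ω, (X ω - a) ^ 2 ∂ν := variance_le_expectation_sq (by fun_prop)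

lemma integral_sub_sq_add_const_mul {Ω : Type*} [MeasurableSpace Ω]
    {ν : Measure Ω} [IsFiniteMeasure ν] {X : Ω → ℝ} (hX : MemLp X 2 ν) (a c : ℝ) :
    ∫ ω, ((X ω - a) ^ 2 + c * X ω) ∂ν = ∫ ω, (X ω - a) ^ 2 ∂ν + c * ∫ ω, X ω ∂ν := by
  have hsq : Integrable (fun ω ↦ (X ω - a) ^ 2) ν := (hX.sub (memLp_const a)).integrable_sq
  rw [integral_add hsq ((hX.integrable one_le_two).const_mul c), integral_const_mul]

lemma isGreatest_mul_add_two_mul_sub_sq_image_Ici {k : ℝ} (hk : 0 ≤ k) (d c : ℝ) :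
    IsGreatest ((fun α : ℝ ↦ k * (d + (2 * α * c - α ^ 2))) '' Set.Ici 0)
      (k * (d + max c 0 ^ 2)) := by
  refine ⟨⟨max c 0, le_max_right c 0, ?_⟩, ?_⟩
  · rcases le_total c 0 with h | h
    · simp [max_eq_right h]
    · simp only [max_eq_left h]; ring
  · rintro _ ⟨α, hα, rfl⟩
    dsimp only
    gcongr
    rcases le_total c 0 with h | h
    · rw [max_eq_right h]; nlinarith [Set.mem_Ici.mp hα]
    · rw [max_eq_left h]; nlinarith [sq_nonneg (α - c)]

section AUCMargin

variable {Ω : Type*} {A : Set Ω} {p m : ℝ} {S : Ω → ℝ}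

lemma FM_eq_indicator_add_indicator_add (a b α : ℝ) (ω : Ω) :
    FM A p m S a b α ω =
      A.indicator (fun ω ↦ (1 - p) * ((S ω - a) ^ 2 + -(2 * α) * S ω)) ω
        + Aᶜ.indicator (fun ω ↦ p * ((S ω - b) ^ 2 + 2 * α * S ω)) ω
        + p * (1 - p) * (2 * α * m - α ^ 2) := by
  by_cases h : ω ∈ A <;>
    simp only [FM, h, Set.mem_compl_iff, not_true_eq_false, not_false_eq_true,
      Set.indicator_of_mem, Set.indicator_of_notMem, Pi.one_apply] <;> ring

lemma integral_FM [MeasurableSpace Ω] {μ : Measure Ω} [IsProbabilityMeasure μ]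
    (hA : MeasurableSet A) (hp : p = (μ A).toReal) (hS : MemLp S 2 μ) (a b α : ℝ) :
    ∫ ω, FM A p m S a b α ω ∂μ = p * (1 - p) *
      ((∫ ω, (S ω - a) ^ 2 ∂μ[|A]) + (∫ ω, (S ω - b) ^ 2 ∂μ[|Aᶜ])
        + (2 * α * (m + (∫ ω, S ω ∂μ[|Aᶜ]) - ∫ ω, S ω ∂μ[|A]) - α ^ 2)) := by
  have hpA : μ.real A = p := hp.symm
  have hpAc : μ.real Aᶜ = 1 - p := by rw [probReal_compl_eq_one_sub hA, hpA]
  have hS' (x c : ℝ) : Integrable (fun ω ↦ (S ω - x) ^ 2 + c * S ω) μ :=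
    (hS.sub (memLp_const x)).integrable_sq.add ((hS.integrable one_le_two).const_mul c)
  have hpos := ((hS' a (-(2 * α))).const_mul (1 - p)).indicator hA
  have hneg := ((hS' b (2 * α)).const_mul p).indicator hA.compl
  simp_rw [FM_eq_indicator_add_indicator_add]
  rw [integral_add (hpos.fun_add hneg) (integrable_const _),
    integral_add hpos hneg, integral_const, integral_indicator hA, integral_indicator hA.compl,
    integral_const_mul, integral_const_mul, integral_sub_sq_add_const_mul (hS.restrict A),
    integral_sub_sq_add_const_mul (hS.restrict Aᶜ)]
  simp only [setIntegral_eq_measureReal_mul_integral_cond (measure_ne_top μ _), hpA, hpAc,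
    probReal_univ, smul_eq_mul]
  ring

end AUCMargin

/-- Attainment of the outer minimum in Theorem 1 at the conditional means:
`sup_{α≥0} E_μ[F_M(a(S), b(S), α)] = p(1−p)·A_M`, and for every `(a,b) ∈ ℝ²`,
`sup_{α≥0} E_μ[F_M(a,b,α)] ≥ p(1−p)·A_M`. -/
theorem minmax_AUC_margin_attained_at_conditional_means
    {Ω : Type*} [MeasurableSpace Ω] (μ : Measure Ω) [IsProbabilityMeasure μ]
    (A : Set Ω) (hA : MeasurableSet A)
    (p : ℝ) (hp : p = (μ A).toReal) (hp0 : 0 < p) (hp1 : p < 1)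
    (S : Ω → ℝ) (hS : MemLp S 2 μ) (m : ℝ)
    (aS bS AM : ℝ)
    (haS : aS = ∫ ω, S ω ∂μ[|A]) (hbS : bS = ∫ ω, S ω ∂μ[|Aᶜ])
    (hAM : AM = (∫ ω, (S ω - aS) ^ 2 ∂μ[|A]) + (∫ ω, (S ω - bS) ^ 2 ∂μ[|Aᶜ])
        + max (m + bS - aS) 0 ^ 2) :
    sSup ((fun α : ℝ => ∫ ω, FM A p m S aS bS α ω ∂μ) '' Set.Ici 0)
        = p * (1 - p) * AM ∧
    ∀ a b : ℝ,
      p * (1 - p) * AM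
        ≤ sSup ((fun α : ℝ => ∫ ω, FM A p m S a b α ω ∂μ) '' Set.Ici 0) := by
  have hk : 0 ≤ p * (1 - p) := mul_nonneg hp0.le (by linarith)
  have hsup (a b : ℝ) : sSup ((fun α : ℝ => ∫ ω, FM A p m S a b α ω ∂μ) '' Set.Ici 0)
      = p * (1 - p) * ((∫ ω, (S ω - a) ^ 2 ∂μ[|A]) + (∫ ω, (S ω - b) ^ 2 ∂μ[|Aᶜ])
        + max (m + bS - aS) 0 ^ 2) := by
    simp_rw [integral_FM hA hp hS, ← haS, ← hbS]
    exact (isGreatest_mul_add_two_mul_sub_sq_image_Ici hk _ _).csSup_eq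
  have hμA : μ A ≠ 0 := by
    rintro h; simp [h] at hp; linarith
  have hμAc : μ Aᶜ ≠ 0 := by
    rw [← measureReal_ne_zero_iff (measure_ne_top μ _), probReal_compl_eq_one_sub hA,
      measureReal_def, ← hp]
    exact sub_ne_zero.mpr hp1.ne'
  have : IsProbabilityMeasure μ[|A] := cond_isProbabilityMeasure hμA
  have : IsProbabilityMeasure μ[|Aᶜ] := cond_isProbabilityMeasure hμAc
  have hSm := hS.aestronglyMeasurable
  refine ⟨by rw [hsup, hAM], fun a b ↦ ?_⟩
  rw [hsup, hAM, haS, hbS]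
  refine mul_le_mul_of_nonneg_left (add_le_add_left (add_le_add ?_ ?_) _) hk
  · exact integral_sub_integral_sq_le_integral_sub_sq (hSm.mono_ac cond_absolutelyContinuous) a
  · exact integral_sub_integral_sq_le_integral_sub_sq (hSm.mono_ac cond_absolutelyContinuous) b
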